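/- Let (X,ρ,μ) be a space of homogeneous type with positive lower dimension d > 0 (i.e., (R/r)^d ≲ V(x,R)/V(x,r)). Then, for δ ∈ (0,1) small enough depending only on the structural constants, any system of dyadic cubes with scale parameter δ has the property that every cube R ∈ 𝒟_k is the union of at least two distinct cubes of 𝒟_{k+1}; in particular, each cube appears at exactly one level of the dyadic system. -/

import Mathlib

/-!
Let `Q ∈ 𝒟_{k+1}` be a child of `R ∈ 𝒟_k`, with centres `z_Q`, `z_R`. The lower dimension bound
gives `μ Q ≤ μ B(z_Q, C₀δ^{k+1}) ≲ δ^d μ B(z_Q, C₀δ^k)`, and since `z_Q ∈ R`, doubling bounds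
`μ B(z_Q, C₀δ^k)` by `C^N μ B(z_R, c₀δ^k) ≤ C^N μ R` with `N` independent of `δ`. Hence for `δ`
small every child has strictly smaller measure than its parent, so no cube is its own child.
A cube with a single child would be equal to it, and a cube lying in levels `k < k'` would be
equal to its ancestor at level `k + 1`.
-/

open Set MeasureTheory
open scoped ENNReal NNReal

/-- The (open) ball of a quasi-metric. -/
def qball {X : Type*} (ρ : X → X → ℝ) (x : X) (r : ℝ) : Set X := {y | ρ x y < r}

/-- A system of dyadic cubes on a quasi-metric measure space. -/
structure DyadicSystem {X : Type*} [MeasurableSpace X] (ρ : X → X → ℝ) (δ c₀ C₀ : ℝ) where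
  cubes : ℤ → Set (Set X)
  measurable : ∀ k, ∀ Q ∈ cubes k, MeasurableSet Q
  covers : ∀ k, ⋃₀ cubes k = Set.univ
  pairwiseDisjoint : ∀ k, (cubes k).PairwiseDisjoint id
  refines : ∀ k, ∀ Q ∈ cubes (k + 1), ∃ R ∈ cubes k, Q ⊆ R
  comparable : ∀ k, ∀ Q ∈ cubes k, ∃ z : X,
    qball ρ z (c₀ * δ ^ k) ⊆ Q ∧ Q ⊆ qball ρ z (C₀ * δ ^ k)

open Filter Topology

lemma exists_forall_lt_mul_inv_rpow {d c : ℝ} (hd : 0 < d) (hc : 0 < c) (M : ℝ) :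
    ∃ δ₀, 0 < δ₀ ∧ δ₀ < 1 ∧ ∀ δ, 0 < δ → δ ≤ δ₀ → M < c * δ⁻¹ ^ d := by
  have hlim : Tendsto (fun δ : ℝ => c * δ⁻¹ ^ d) (𝓝[>] 0) atTop :=
    ((tendsto_rpow_atTop hd).comp tendsto_inv_nhdsGT_zero).const_mul_atTop hc
  obtain ⟨ε, hε, hM⟩ := (nhdsGT_basis_Ioc (0 : ℝ)).eventually_iff.mp (hlim.eventually_gt_atTop M)
  exact ⟨min ε (1 / 2), by positivity, by linarith [min_le_right ε (1 / 2)],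
    fun δ hδ hδε => hM ⟨hδ, hδε.trans (min_le_left _ _)⟩⟩

lemma ENNReal.lt_of_mul_le_mul_of_lt {a b x y : ℝ≥0∞} (h : a * x ≤ b * y) (hba : b < a)
    (hy₀ : y ≠ 0) (hy : y ≠ ∞) : x < y := by
  by_contra! hyx
  have : a * y ≤ b * y := (mul_le_mul_right hyx a).trans h
  exact (ENNReal.mul_le_mul_iff_left hy₀ hy).mp this |>.not_gt hba

section QuasiMetric

variable {X : Type*} {ρ : X → X → ℝ}

lemma qball_mono {x : X} {r s : ℝ} (h : r ≤ s) : qball ρ x r ⊆ qball ρ x s :=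
  fun _ hy => lt_of_lt_of_le hy h

lemma mem_qball_self (hρ : ∀ x, ρ x x = 0) (x : X) {r : ℝ} (hr : 0 < r) : x ∈ qball ρ x r := by
  simpa [qball, hρ] using hr

lemma qball_subset_qball_of_lt {A₀ : ℝ} (hA₀ : 0 < A₀)
    (htri : ∀ x y z, ρ x y ≤ A₀ * (ρ x z + ρ z y)) {z w : X} {s : ℝ} (hzw : ρ z w < s) :
    qball ρ w s ⊆ qball ρ z (2 * A₀ * s) := fun y (hy : ρ w y < s) =>
  calc ρ z y ≤ A₀ * (ρ z w + ρ w y) := htri z y w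
    _ < A₀ * (s + s) := by gcongr
    _ = 2 * A₀ * s := by ring

variable [MeasurableSpace X] {μ : Measure X} {C : ℝ≥0}

lemma measure_qball_two_pow_mul_le
    (hC : ∀ x r, 0 < r → μ (qball ρ x (2 * r)) ≤ C * μ (qball ρ x r))
    (n : ℕ) (x : X) {r : ℝ} (hr : 0 < r) :
    μ (qball ρ x (2 ^ n * r)) ≤ C ^ n * μ (qball ρ x r) := by
  induction n with
  | zero => simp
  | succ n ih =>
    calc μ (qball ρ x (2 ^ (n + 1) * r)) = μ (qball ρ x (2 * (2 ^ n * r))) := by ring_nf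
      _ ≤ C * μ (qball ρ x (2 ^ n * r)) := hC x _ (by positivity)
      _ ≤ C * (C ^ n * μ (qball ρ x r)) := by gcongr
      _ = C ^ (n + 1) * μ (qball ρ x r) := by ring

lemma measure_qball_le_pow_mul_of_lt {A₀ : ℝ} (hA₀ : 0 < A₀)
    (htri : ∀ x y z, ρ x y ≤ A₀ * (ρ x z + ρ z y))
    (hC : ∀ x r, 0 < r → μ (qball ρ x (2 * r)) ≤ C * μ (qball ρ x r))
    {N : ℕ} {r s : ℝ} (hr : 0 < r) (hN : 2 * A₀ * s ≤ 2 ^ N * r) {z w : X} (hzw : ρ z w < s) :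
    μ (qball ρ w s) ≤ C ^ N * μ (qball ρ z r) :=
  calc μ (qball ρ w s) ≤ μ (qball ρ z (2 ^ N * r)) :=
        measure_mono ((qball_subset_qball_of_lt hA₀ htri hzw).trans (qball_mono hN))
    _ ≤ C ^ N * μ (qball ρ z r) := measure_qball_two_pow_mul_le hC N z hr

end QuasiMetric

namespace DyadicSystem

variable {X : Type*} [MeasurableSpace X] {ρ : X → X → ℝ} {δ c₀ C₀ : ℝ}
  (𝒟 : DyadicSystem ρ δ c₀ C₀) {Q R : Set X} {k : ℤ}

lemma eq_of_mem_of_mem {x : X} (hQ : Q ∈ 𝒟.cubes k) (hR : R ∈ 𝒟.cubes k) (hxQ : x ∈ Q)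
    (hxR : x ∈ R) : Q = R :=
  (𝒟.pairwiseDisjoint k).elim_set hQ hR x hxQ hxR

lemma exists_child_mem {x : X} (hR : R ∈ 𝒟.cubes k) (hxR : x ∈ R) :
    ∃ Q ∈ 𝒟.cubes (k + 1), x ∈ Q ∧ Q ⊆ R := by
  obtain ⟨Q, hQ, hxQ⟩ : x ∈ ⋃₀ 𝒟.cubes (k + 1) := by simp [𝒟.covers]
  obtain ⟨R', hR', hQR'⟩ := 𝒟.refines k Q hQ
  obtain rfl := 𝒟.eq_of_mem_of_mem hR' hR (hQR' hxQ) hxR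
  exact ⟨Q, hQ, hxQ, hQR'⟩

lemma exists_superset_of_le {m : ℤ} (hmk : m ≤ k) (hQ : Q ∈ 𝒟.cubes k) :
    ∃ R ∈ 𝒟.cubes m, Q ⊆ R := by
  induction k, hmk using Int.leInduction generalizing Q with
  | base => exact ⟨Q, hQ, subset_rfl⟩
  | succ n _ ih =>
    obtain ⟨S, hS, hQS⟩ := 𝒟.refines n Q hQ
    obtain ⟨R, hR, hSR⟩ := ih hS
    exact ⟨R, hR, hQS.trans hSR⟩

lemma exists_center (hρ : ∀ x, ρ x x = 0) (hc₀ : 0 < c₀) (hδ : 0 < δ) (hQ : Q ∈ 𝒟.cubes k) :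
    ∃ z ∈ Q, qball ρ z (c₀ * δ ^ k) ⊆ Q ∧ Q ⊆ qball ρ z (C₀ * δ ^ k) := by
  obtain ⟨z, hzQ, hQz⟩ := 𝒟.comparable k Q hQ
  exact ⟨z, hzQ (mem_qball_self hρ z (by positivity)), hzQ, hQz⟩

lemma exists_two_children (hR : R ∈ 𝒟.cubes k) (hRne : R.Nonempty)
    (hproper : ∀ Q ∈ 𝒟.cubes (k + 1), Q ⊆ R → Q ≠ R) :
    ∃ Q₁ ∈ 𝒟.cubes (k + 1), ∃ Q₂ ∈ 𝒟.cubes (k + 1), Q₁ ≠ Q₂ ∧ Q₁ ⊆ R ∧ Q₂ ⊆ R := by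
  obtain ⟨x, hx⟩ := hRne
  obtain ⟨Q₁, hQ₁, -, hQ₁R⟩ := 𝒟.exists_child_mem hR hx
  obtain ⟨y, hyR, hyQ₁⟩ := not_subset.mp fun hRQ₁ => hproper Q₁ hQ₁ hQ₁R (hQ₁R.antisymm hRQ₁)
  obtain ⟨Q₂, hQ₂, hyQ₂, hQ₂R⟩ := 𝒟.exists_child_mem hR hyR
  exact ⟨Q₁, hQ₁, Q₂, hQ₂, fun h => hyQ₁ (h ▸ hyQ₂), hQ₁R, hQ₂R⟩

lemma notMem_cubes_of_lt
    (hproper : ∀ k, ∀ Q ∈ 𝒟.cubes (k + 1), ∀ R ∈ 𝒟.cubes k, Q ⊆ R → Q ≠ R)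
    (hQne : Q.Nonempty) {k' : ℤ} (hkk' : k < k') (hk : Q ∈ 𝒟.cubes k) : Q ∉ 𝒟.cubes k' := by
  intro hk'
  obtain ⟨x, hx⟩ := hQne
  obtain ⟨R, hR, hQR⟩ := 𝒟.exists_superset_of_le hkk' hk'
  obtain ⟨S, hS, hRS⟩ := 𝒟.refines k R hR
  obtain rfl := 𝒟.eq_of_mem_of_mem hk hS hx (hRS (hQR hx))
  exact hproper k R hR Q hk hRS (hRS.antisymm hQR)

lemma level_eq_of_mem_of_mem
    (hproper : ∀ k, ∀ Q ∈ 𝒟.cubes (k + 1), ∀ R ∈ 𝒟.cubes k, Q ⊆ R → Q ≠ R)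
    (hQne : Q.Nonempty) {k' : ℤ} (hk : Q ∈ 𝒟.cubes k) (hk' : Q ∈ 𝒟.cubes k') : k = k' := by
  rcases lt_trichotomy k k' with hlt | heq | hgt
  · exact absurd hk' (𝒟.notMem_cubes_of_lt hproper hQne hlt hk)
  · exact heq
  · exact absurd hk (𝒟.notMem_cubes_of_lt hproper hQne hgt hk')

variable {μ : Measure X} {A₀ : ℝ} {C : ℝ≥0} {N : ℕ} {d cl : ℝ}

lemma ofReal_mul_measure_le_of_subset (hρ : ∀ x, ρ x x = 0) (hA₀ : 0 < A₀)
    (htri : ∀ x y z, ρ x y ≤ A₀ * (ρ x z + ρ z y))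
    (hC : ∀ x r, 0 < r → μ (qball ρ x (2 * r)) ≤ C * μ (qball ρ x r))
    (hlow : ∀ x r R, 0 < r → r ≤ R →
      ENNReal.ofReal (cl * (R / r) ^ d) * μ (qball ρ x r) ≤ μ (qball ρ x R))
    (hc₀ : 0 < c₀) (hC₀ : c₀ ≤ C₀) (hδ : 0 < δ) (hδ1 : δ ≤ 1) (hN : 2 * A₀ * C₀ ≤ 2 ^ N * c₀)
    (hQ : Q ∈ 𝒟.cubes (k + 1)) (hR : R ∈ 𝒟.cubes k) (hQR : Q ⊆ R) :
    ENNReal.ofReal (cl * δ⁻¹ ^ d) * μ Q ≤ C ^ N * μ R := by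
  obtain ⟨zQ, hzQ, -, hQzQ⟩ := 𝒟.exists_center hρ hc₀ hδ hQ
  obtain ⟨zR, -, hzRR, hRzR⟩ := 𝒟.exists_center hρ hc₀ hδ hR
  have hC₀pos : 0 < C₀ := hc₀.trans_le hC₀
  have hδk : 0 < δ ^ k := zpow_pos hδ k
  have hscale : C₀ * δ ^ (k + 1) = C₀ * δ ^ k * δ := by rw [zpow_add_one₀ hδ.ne', mul_assoc]
  have hratio : C₀ * δ ^ k / (C₀ * δ ^ (k + 1)) = δ⁻¹ := by
    rw [hscale]; field_simp
  calc ENNReal.ofReal (cl * δ⁻¹ ^ d) * μ Q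
      ≤ ENNReal.ofReal (cl * δ⁻¹ ^ d) * μ (qball ρ zQ (C₀ * δ ^ (k + 1))) := by
        gcongr
    _ ≤ μ (qball ρ zQ (C₀ * δ ^ k)) := by
        rw [← hratio]
        exact hlow zQ _ _ (by rw [hscale]; positivity)
          (by rw [hscale]; exact mul_le_of_le_one_right (by positivity) hδ1)
    _ ≤ C ^ N * μ (qball ρ zR (c₀ * δ ^ k)) :=
        measure_qball_le_pow_mul_of_lt hA₀ htri hC (by positivity)
          (by rw [← mul_assoc, ← mul_assoc]; gcongr) (hRzR (hQR hzQ))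
    _ ≤ C ^ N * μ R := by gcongr

lemma measure_lt_of_subset (hρ : ∀ x, ρ x x = 0) (hA₀ : 0 < A₀)
    (htri : ∀ x y z, ρ x y ≤ A₀ * (ρ x z + ρ z y))
    (hC : ∀ x r, 0 < r → μ (qball ρ x (2 * r)) ≤ C * μ (qball ρ x r))
    (hpos : ∀ x r, 0 < r → 0 < μ (qball ρ x r))
    (hfin : ∀ x r, 0 < r → μ (qball ρ x r) < ⊤)
    (hlow : ∀ x r R, 0 < r → r ≤ R →
      ENNReal.ofReal (cl * (R / r) ^ d) * μ (qball ρ x r) ≤ μ (qball ρ x R))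
    (hc₀ : 0 < c₀) (hC₀ : c₀ ≤ C₀) (hδ : 0 < δ) (hδ1 : δ ≤ 1) (hN : 2 * A₀ * C₀ ≤ 2 ^ N * c₀)
    (hsmall : (C : ℝ) ^ N < cl * δ⁻¹ ^ d)
    (hQ : Q ∈ 𝒟.cubes (k + 1)) (hR : R ∈ 𝒟.cubes k) (hQR : Q ⊆ R) : μ Q < μ R := by
  obtain ⟨zR, -, hzRR, hRzR⟩ := 𝒟.exists_center hρ hc₀ hδ hR
  have hδk : 0 < δ ^ k := zpow_pos hδ k
  refine ENNReal.lt_of_mul_le_mul_of_lt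
    (𝒟.ofReal_mul_measure_le_of_subset hρ hA₀ htri hC hlow hc₀ hC₀ hδ hδ1 hN hQ hR hQR) ?_
    ((hpos zR _ (by positivity)).trans_le (measure_mono hzRR)).ne'
    ((measure_mono hRzR).trans_lt (hfin zR _ (mul_pos (hc₀.trans_le hC₀) hδk))).ne
  rwa [ENNReal.lt_ofReal_iff_toReal_lt (by finiteness), ENNReal.toReal_pow, ENNReal.coe_toReal]

end DyadicSystem

theorem dyadic_unique_level_of_lower_dim_general {X : Type*} [MeasurableSpace X]
    (ρ : X → X → ℝ) (μ : Measure X)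
    (A₀ : ℝ) (hA₀ : 1 ≤ A₀)
    (hρeq : ∀ x y, ρ x y = 0 ↔ x = y)
    (hρtri : ∀ x y z, ρ x y ≤ A₀ * (ρ x z + ρ z y))
    (hdoub : ∃ Cd : ℝ≥0, ∀ x r, 0 < r → μ (qball ρ x (2 * r)) ≤ Cd * μ (qball ρ x r))
    (hpos : ∀ x r, 0 < r → 0 < μ (qball ρ x r))
    (hfin : ∀ x r, 0 < r → μ (qball ρ x r) < ⊤)
    (d : ℝ) (hd : 0 < d) (cl : ℝ) (hcl : 0 < cl)
    (hlow : ∀ x r R, 0 < r → r ≤ R →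
      ENNReal.ofReal (cl * (R / r) ^ d) * μ (qball ρ x r) ≤ μ (qball ρ x R))
    (c₀ C₀ : ℝ) (hc₀ : 0 < c₀) (hC₀ : c₀ ≤ C₀) :
    ∃ δ₀ : ℝ, 0 < δ₀ ∧ δ₀ < 1 ∧ ∀ δ : ℝ, 0 < δ → δ ≤ δ₀ →
      ∀ 𝒟 : DyadicSystem ρ δ c₀ C₀,
        (∀ k, ∀ R ∈ 𝒟.cubes k, ∃ Q₁ ∈ 𝒟.cubes (k + 1), ∃ Q₂ ∈ 𝒟.cubes (k + 1),
          Q₁ ≠ Q₂ ∧ Q₁ ⊆ R ∧ Q₂ ⊆ R) ∧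
        (∀ Q k k', Q ∈ 𝒟.cubes k → Q ∈ 𝒟.cubes k' → k = k') := by
  obtain ⟨Cd, hCd⟩ := hdoub
  have hρ : ∀ x, ρ x x = 0 := fun x => (hρeq x x).mpr rfl
  have hA₀pos : 0 < A₀ := one_pos.trans_le hA₀
  obtain ⟨N, hN⟩ : ∃ N : ℕ, 2 * A₀ * C₀ ≤ 2 ^ N * c₀ := by
    obtain ⟨N, hN⟩ := pow_unbounded_of_one_lt (2 * A₀ * C₀ / c₀) one_lt_two
    exact ⟨N, ((div_lt_iff₀ hc₀).mp hN).le⟩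
  obtain ⟨δ₀, hδ₀, hδ₀1, hsmall⟩ := exists_forall_lt_mul_inv_rpow hd hcl ((Cd : ℝ) ^ N)
  refine ⟨δ₀, hδ₀, hδ₀1, fun δ hδ hδδ₀ 𝒟 => ?_⟩
  have hδ1 : δ ≤ 1 := (hδδ₀.trans_lt hδ₀1).le
  have hproper : ∀ k, ∀ Q ∈ 𝒟.cubes (k + 1), ∀ R ∈ 𝒟.cubes k, Q ⊆ R → Q ≠ R :=
    fun k Q hQ R hR hQR hQR' => (𝒟.measure_lt_of_subset hρ hA₀pos hρtri hCd hpos hfin hlow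
      hc₀ hC₀ hδ hδ1 hN (hsmall δ hδ hδδ₀) hQ hR hQR).ne (congrArg μ hQR')
  have hne : ∀ k, ∀ Q ∈ 𝒟.cubes k, Q.Nonempty := fun k Q hQ =>
    let ⟨z, hz, _⟩ := 𝒟.exists_center hρ hc₀ hδ hQ; ⟨z, hz⟩
  exact ⟨fun k R hR => 𝒟.exists_two_children hR (hne k R hR) (hproper k · · R hR),
    fun Q k k' hk hk' => 𝒟.level_eq_of_mem_of_mem hproper (hne k Q hk) hk hk'⟩

/-- On a space of homogeneous type of positive lower dimension `d > 0`, for `δ` small enough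
(depending only on the structural constants), every cube of a dyadic system with scale
parameter `δ` has at least two distinct dyadic children; in particular each cube appears at
exactly one level. -/
theorem dyadic_unique_level_of_lower_dim {X : Type*} [MeasurableSpace X]
    (ρ : X → X → ℝ) (μ : Measure X)
    (A₀ : ℝ) (hA₀ : 1 ≤ A₀)
    (hρ0 : ∀ x y, 0 ≤ ρ x y) (hρeq : ∀ x y, ρ x y = 0 ↔ x = y)
    (hρsymm : ∀ x y, ρ x y = ρ y x)
    (hρtri : ∀ x y z, ρ x y ≤ A₀ * (ρ x z + ρ z y))
    (hdoub : ∃ Cd : ℝ≥0, ∀ x r, 0 < r → μ (qball ρ x (2 * r)) ≤ Cd * μ (qball ρ x r))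
    (hpos : ∀ x r, 0 < r → 0 < μ (qball ρ x r))
    (hfin : ∀ x r, 0 < r → μ (qball ρ x r) < ⊤)
    (d : ℝ) (hd : 0 < d) (cl : ℝ) (hcl : 0 < cl)
    (hlow : ∀ x r R, 0 < r → r ≤ R →
      ENNReal.ofReal (cl * (R / r) ^ d) * μ (qball ρ x r) ≤ μ (qball ρ x R))
    (c₀ C₀ : ℝ) (hc₀ : 0 < c₀) (hC₀ : c₀ ≤ C₀) :
    ∃ δ₀ : ℝ, 0 < δ₀ ∧ δ₀ < 1 ∧ ∀ δ : ℝ, 0 < δ → δ ≤ δ₀ →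
      ∀ 𝒟 : DyadicSystem ρ δ c₀ C₀,
        (∀ k, ∀ R ∈ 𝒟.cubes k, ∃ Q₁ ∈ 𝒟.cubes (k + 1), ∃ Q₂ ∈ 𝒟.cubes (k + 1),
          Q₁ ≠ Q₂ ∧ Q₁ ⊆ R ∧ Q₂ ⊆ R) ∧
        (∀ Q k k', Q ∈ 𝒟.cubes k → Q ∈ 𝒟.cubes k' → k = k') :=
  dyadic_unique_level_of_lower_dim_general ρ μ A₀ hA₀ hρeq hρtri hdoub hpos hfin d hd cl hcl hlow c₀
    C₀ hc₀ hC₀
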